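/- For every ϑ ∈ (0,1): g_ϑ(x) ~ (1/ϑ) x^ϑ log x as x → ∞, g_ϑ is subadditive on [0,∞) (i.e., g_ϑ(x+y) ≤ g_ϑ(x) + g_ϑ(y) for all x, y ≥ 0), and there exists a constant C_ϑ > 0 such that g_ϑ(x) ≤ C_ϑ f_1(x^ϑ) for all x ≥ 0. -/

import Mathlib

open Filter
open scoped Topology

noncomputable section

/-- `log₊ x = max (log x) 0`. -/
def plog (x : ℝ) : ℝ := max (Real.log x) 0

/-- `f_p(x) = (1 + (log₊ x)^p) * x`. -/
def fp (p x : ℝ) : ℝ := (1 + plog x ^ p) * x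

/-- `g_ϑ'(t) = t^{ϑ−1}/(1−ϑ)` for `t ≤ e^{1/(1−ϑ)}` and `t^{ϑ−1} log t` beyond, for `ϑ ∈ (0,1)`. -/
def gDeriv (ϑ t : ℝ) : ℝ :=
  if t ≤ Real.exp (1 / (1 - ϑ)) then t ^ (ϑ - 1) / (1 - ϑ) else t ^ (ϑ - 1) * Real.log t

/-- `g_ϑ(x) = ∫_0^x g_ϑ'(t) dt`. -/
def gFun (ϑ x : ℝ) : ℝ := ∫ t in (0:ℝ)..x, gDeriv ϑ t

section Helpers

open Real MeasureTheory Set intervalIntegral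

namespace GAux

variable {ϑ : ℝ}

lemma one_lt_E (h0 : 0 < ϑ) (h1 : ϑ < 1) : (1:ℝ) < Real.exp (1/(1-ϑ)) := by
  have h : (0:ℝ) < 1/(1-ϑ) := div_pos one_pos (by linarith)
  have h2 := Real.exp_lt_exp.2 h
  rwa [Real.exp_zero] at h2

lemma gDeriv_eq_right (h1 : ϑ < 1) {t : ℝ} (ht : Real.exp (1/(1-ϑ)) ≤ t) :
    gDeriv ϑ t = t ^ (ϑ-1) * Real.log t := by
  unfold gDeriv
  rcases eq_or_lt_of_le ht with h | h
  · rw [← h, if_pos le_rfl, Real.log_exp]; ring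
  · rw [if_neg (not_le.2 h)]

lemma gFun_eq_left (h0 : 0 < ϑ) (h1 : ϑ < 1) {x : ℝ} (hx0 : 0 ≤ x)
    (hx : x ≤ Real.exp (1/(1-ϑ))) : gFun ϑ x = x ^ ϑ / (ϑ * (1-ϑ)) := by
  have h : gFun ϑ x = ∫ t in (0:ℝ)..x, t ^ (ϑ-1) / (1-ϑ) := by
    apply intervalIntegral.integral_congr
    intro t ht
    rw [Set.uIcc_of_le hx0] at ht
    exact if_pos (le_trans ht.2 hx)
  rw [h, intervalIntegral.integral_div, integral_rpow (Or.inl (by linarith))]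
  have h2 : ϑ - 1 + 1 = ϑ := by ring
  rw [h2, Real.zero_rpow h0.ne']
  field_simp
  ring

lemma intInt0 (h0 : 0 < ϑ) (h1 : ϑ < 1) {c : ℝ} (hc : 0 ≤ c) :
    IntervalIntegrable (gDeriv ϑ) volume 0 c := by
  set E := Real.exp (1/(1-ϑ)) with hE
  have hbase : ∀ d : ℝ, 0 ≤ d → d ≤ E → IntervalIntegrable (gDeriv ϑ) volume 0 d := by
    intro d hd0 hdE
    have : IntervalIntegrable (fun t : ℝ => t ^ (ϑ-1) / (1-ϑ)) volume 0 d :=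
      (intervalIntegrable_rpow' (by linarith)).div_const (1-ϑ)
    apply this.congr
    intro t ht
    rw [Set.uIoc_of_le hd0] at ht
    exact (if_pos (le_trans ht.2 hdE)).symm
  rcases le_or_gt c E with h | h
  · exact hbase c hc h
  · have hE0 : (0:ℝ) < E := Real.exp_pos _
    refine (hbase E hE0.le le_rfl).trans ?_
    have hcont : ContinuousOn (gDeriv ϑ) (Set.uIcc E c) := by
      have hsub : Set.uIcc E c ⊆ Set.Ici E := by
        rw [Set.uIcc_of_le h.le]; exact Set.Icc_subset_Ici_self
      have hc1 : ContinuousOn (fun t : ℝ => t ^ (ϑ-1) * Real.log t) (Set.uIcc E c) := by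
        apply ContinuousOn.mul
        · apply ContinuousOn.rpow_const continuousOn_id
          intro t ht
          exact Or.inl (ne_of_gt (lt_of_lt_of_le hE0 (hsub ht)))
        · apply Real.continuousOn_log.mono
          intro t ht
          exact ne_of_gt (lt_of_lt_of_le hE0 (hsub ht))
      exact hc1.congr fun t ht => gDeriv_eq_right h1 (hsub ht)
    exact hcont.intervalIntegrable

lemma intInt (h0 : 0 < ϑ) (h1 : ϑ < 1) {a b : ℝ} (ha : 0 ≤ a) (hb : 0 ≤ b) :
    IntervalIntegrable (gDeriv ϑ) volume a b :=
  (intInt0 h0 h1 ha).symm.trans (intInt0 h0 h1 hb)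

lemma gFun_eq_right (h0 : 0 < ϑ) (h1 : ϑ < 1) {x : ℝ}
    (hx : Real.exp (1/(1-ϑ)) ≤ x) :
    gFun ϑ x = x ^ ϑ * Real.log x / ϑ - x ^ ϑ / ϑ^2 + (Real.exp (1/(1-ϑ))) ^ ϑ / ϑ^2 := by
  set E := Real.exp (1/(1-ϑ)) with hE
  have hE0 : (0:ℝ) < E := Real.exp_pos _
  have hsplit : gFun ϑ E + ∫ t in E..x, gDeriv ϑ t = gFun ϑ x :=
    intervalIntegral.integral_add_adjacent_intervals (intInt h0 h1 le_rfl hE0.le)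
      (intInt h0 h1 hE0.le (hE0.le.trans hx))
  have hF : ∀ t ∈ Set.uIcc E x, HasDerivAt (fun t : ℝ => t ^ ϑ * Real.log t / ϑ - t ^ ϑ / ϑ^2)
      (gDeriv ϑ t) t := by
    intro t ht
    rw [Set.uIcc_of_le hx] at ht
    have ht0 : (0:ℝ) < t := lt_of_lt_of_le hE0 ht.1
    have h1' : HasDerivAt (fun t : ℝ => t ^ ϑ) (ϑ * t ^ (ϑ - 1)) t :=
      Real.hasDerivAt_rpow_const (Or.inl ht0.ne')
    have h2' : HasDerivAt Real.log t⁻¹ t := Real.hasDerivAt_log ht0.ne'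
    have h3 := ((h1'.mul h2').div_const ϑ).sub (h1'.div_const (ϑ^2))
    have h4 : t ^ ϑ * t⁻¹ = t ^ (ϑ - 1) := by
      rw [Real.rpow_sub_one ht0.ne']; ring
    refine h3.congr_deriv ?_
    rw [gDeriv_eq_right h1 ht.1, h4]
    field_simp
    ring
  have hint : IntervalIntegrable (gDeriv ϑ) volume E x := intInt h0 h1 hE0.le (hE0.le.trans hx)
  have := intervalIntegral.integral_eq_sub_of_hasDerivAt hF hint
  rw [this] at hsplit
  rw [← hsplit, gFun_eq_left h0 h1 hE0.le le_rfl, hE, Real.log_exp]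
  have hϑ : ϑ ≠ 0 := h0.ne'
  field_simp
  ring

lemma gDeriv_anti (h0 : 0 < ϑ) (h1 : ϑ < 1) : AntitoneOn (gDeriv ϑ) (Set.Ioi 0) := by
  set E := Real.exp (1/(1-ϑ)) with hE
  have hE0 : (0:ℝ) < E := Real.exp_pos _
  have hanti : AntitoneOn (fun t : ℝ => t ^ (ϑ-1) * Real.log t) (Set.Ici E) := by
    apply antitoneOn_of_deriv_nonpos (convex_Ici E)
    · apply ContinuousOn.mul
      · apply ContinuousOn.rpow_const continuousOn_id
        intro t ht
        exact Or.inl (ne_of_gt (lt_of_lt_of_le hE0 ht))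
      · exact Real.continuousOn_log.mono fun t ht => ne_of_gt (lt_of_lt_of_le hE0 ht)
    · rw [interior_Ici]
      intro t ht
      have ht0 : (0:ℝ) < t := lt_trans hE0 ht
      exact (((Real.hasDerivAt_rpow_const (p := ϑ-1) (Or.inl ht0.ne')).mul
        (Real.hasDerivAt_log ht0.ne'))).differentiableAt.differentiableWithinAt
    · rw [interior_Ici]
      intro t ht
      have ht0 : (0:ℝ) < t := lt_trans hE0 ht
      have hd : HasDerivAt (fun t : ℝ => t ^ (ϑ-1) * Real.log t)
          ((ϑ-1) * t ^ (ϑ-1-1) * Real.log t + t ^ (ϑ-1) * t⁻¹) t :=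
        (Real.hasDerivAt_rpow_const (Or.inl ht0.ne')).mul (Real.hasDerivAt_log ht0.ne')
      rw [hd.deriv]
      have h4 : t ^ (ϑ-1) * t⁻¹ = t ^ (ϑ-1-1) := by
        rw [Real.rpow_sub_one (y := ϑ-1) ht0.ne']; ring
      rw [h4]
      have hlog : 1/(1-ϑ) ≤ Real.log t := by
        rw [hE] at ht
        calc 1/(1-ϑ) = Real.log E := by rw [hE, Real.log_exp]
        _ ≤ Real.log t := Real.log_le_log (Real.exp_pos _) ht.le
      have hbr : (ϑ-1) * Real.log t + 1 ≤ 0 := by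
        have : (ϑ-1) * Real.log t ≤ (ϑ-1) * (1/(1-ϑ)) :=
          mul_le_mul_of_nonpos_left hlog (by linarith)
        have h5 : (ϑ-1) * (1/(1-ϑ)) = -1 := by
          rw [mul_one_div, div_eq_iff (by linarith : (1:ℝ)-ϑ ≠ 0)]; ring
        linarith [h5 ▸ this]
      have hpos : (0:ℝ) ≤ t ^ (ϑ-1-1) := Real.rpow_nonneg ht0.le _
      nlinarith [Real.rpow_nonneg ht0.le (ϑ-1-1)]
  intro s hs t ht hst
  simp only [Set.mem_Ioi] at hs ht
  rcases le_or_gt t E with h | h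
  · unfold gDeriv
    rw [if_pos h, if_pos (hst.trans h)]
    exact (div_le_div_iff_of_pos_right (by linarith)).2
      (Real.rpow_le_rpow_of_nonpos hs hst (by linarith))
  · rw [gDeriv_eq_right h1 h.le]
    rcases le_or_gt s E with h' | h'
    · calc t ^ (ϑ-1) * Real.log t ≤ E ^ (ϑ-1) * Real.log E :=
          hanti (Set.self_mem_Ici) h.le h.le
      _ = E ^ (ϑ-1) / (1-ϑ) := by rw [hE, Real.log_exp]; ring
      _ ≤ s ^ (ϑ-1) / (1-ϑ) := (div_le_div_iff_of_pos_right (by linarith)).2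
          (Real.rpow_le_rpow_of_nonpos hs h' (by linarith))
      _ = gDeriv ϑ s := by unfold gDeriv; rw [if_pos h']
    · rw [gDeriv_eq_right h1 h'.le]
      exact hanti (le_of_lt h') (h'.le.trans hst) hst

end GAux

namespace GAux2
open GAux

variable {ϑ : ℝ}

lemma gFun_subadd (h0 : 0 < ϑ) (h1 : ϑ < 1) {x y : ℝ} (hx : 0 ≤ x) (hy : 0 ≤ y) :
    gFun ϑ (x+y) ≤ gFun ϑ x + gFun ϑ y := by
  have hxy : 0 ≤ x + y := by linarith
  have hsplit : gFun ϑ x + ∫ t in x..(x+y), gDeriv ϑ t = gFun ϑ (x+y) :=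
    intervalIntegral.integral_add_adjacent_intervals (intInt h0 h1 le_rfl hx)
      (intInt h0 h1 hx hxy)
  rw [← hsplit]
  have hcv : (∫ t in (0:ℝ)..y, gDeriv ϑ (x + t)) = ∫ t in x..(x+y), gDeriv ϑ t := by
    simpa using intervalIntegral.integral_comp_add_left (a := (0:ℝ)) (b := y) (gDeriv ϑ) x
  have hint1 : IntervalIntegrable (fun t => gDeriv ϑ (x + t)) volume 0 y := by
    have := (intInt h0 h1 hx hxy).comp_add_left x
    simpa using this
  have key : (∫ t in x..(x+y), gDeriv ϑ t) ≤ gFun ϑ y := by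
    rw [← hcv]
    unfold gFun
    rw [intervalIntegral.integral_of_le hy, intervalIntegral.integral_of_le hy]
    apply MeasureTheory.setIntegral_mono_on
    · exact (intervalIntegrable_iff_integrableOn_Ioc_of_le hy).1 hint1
    · exact (intervalIntegrable_iff_integrableOn_Ioc_of_le hy).1 (intInt0 h0 h1 hy)
    · exact measurableSet_Ioc
    · intro t ht
      exact gDeriv_anti h0 h1 ht.1 (by simp only [Set.mem_Ioi]; linarith [ht.1])
        (le_add_of_nonneg_left hx)
  linarith

lemma gFun_tendsto (h0 : 0 < ϑ) (h1 : ϑ < 1) :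
    Tendsto (fun x => gFun ϑ x / ((1 / ϑ) * x ^ ϑ * Real.log x)) atTop (𝓝 1) := by
  set E := Real.exp (1/(1-ϑ)) with hE
  have hE0 : (0:ℝ) < E := Real.exp_pos _
  have hA : Tendsto (fun x : ℝ => (ϑ * Real.log x)⁻¹) atTop (𝓝 0) := by
    have h : Tendsto (fun x : ℝ => ϑ * Real.log x) atTop atTop :=
      Real.tendsto_log_atTop.const_mul_atTop h0
    simpa only [Pi.inv_def] using h.inv_tendsto_atTop
  have hB : Tendsto (fun x : ℝ => (E^ϑ/ϑ) / (x ^ ϑ * Real.log x)) atTop (𝓝 0) :=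
    Filter.Tendsto.div_atTop tendsto_const_nhds
      ((tendsto_rpow_atTop h0).atTop_mul_atTop₀ Real.tendsto_log_atTop)
  have hlim : Tendsto (fun x : ℝ => 1 - (ϑ * Real.log x)⁻¹ + (E^ϑ/ϑ)/(x^ϑ * Real.log x))
      atTop (𝓝 1) := by
    have h := ((tendsto_const_nhds :
      Tendsto (fun _ : ℝ => (1:ℝ)) atTop (𝓝 1)).sub hA).add hB
    simpa using h
  apply hlim.congr'
  filter_upwards [eventually_ge_atTop (max E 2)] with x hx
  have hxE : E ≤ x := le_trans (le_max_left _ _) hx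
  have hx2 : (2:ℝ) ≤ x := le_trans (le_max_right _ _) hx
  have hx0 : (0:ℝ) < x := by linarith
  have hlog : 0 < Real.log x := Real.log_pos (by linarith)
  have hxp : 0 < x ^ ϑ := Real.rpow_pos_of_pos hx0 _
  rw [gFun_eq_right h0 h1 hxE]
  rw [← hE]
  field_simp

lemma gFun_bound (h0 : 0 < ϑ) (h1 : ϑ < 1) :
    ∃ C : ℝ, 0 < C ∧ ∀ x : ℝ, 0 ≤ x →
      gFun ϑ x ≤ C * ((1 + max (Real.log (x ^ ϑ)) 0) * x ^ ϑ) := by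
  set E := Real.exp (1/(1-ϑ)) with hE
  have hE0 : (0:ℝ) < E := Real.exp_pos _
  have h1' : (0:ℝ) < 1 - ϑ := by linarith
  refine ⟨1/(ϑ*(1-ϑ)) + 1/ϑ^2, by positivity, ?_⟩
  intro x hx
  have hxp : (0:ℝ) ≤ x ^ ϑ := Real.rpow_nonneg hx _
  have hp : (0:ℝ) ≤ max (Real.log (x ^ ϑ)) 0 := le_max_right _ _
  rcases le_or_gt x E with h | h
  · rw [gFun_eq_left h0 h1 hx h]
    have ha : (0:ℝ) ≤ 1/(ϑ*(1-ϑ)) := by positivity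
    have hb : (0:ℝ) ≤ 1/ϑ^2 := by positivity
    have hkey : x ^ ϑ / (ϑ*(1-ϑ)) = (1/(ϑ*(1-ϑ))) * x ^ ϑ := by ring
    rw [hkey]
    nlinarith [mul_nonneg (mul_nonneg (add_nonneg ha hb) hp) hxp, mul_nonneg hb hxp]
  · rw [gFun_eq_right h0 h1 h.le, ← hE]
    have hx0 : (0:ℝ) < x := lt_trans hE0 h
    have hlog0 : (0:ℝ) ≤ Real.log x := Real.log_nonneg ((one_lt_E h0 h1).le.trans h.le)
    have hplog : max (Real.log (x ^ ϑ)) 0 = ϑ * Real.log x := by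
      rw [Real.log_rpow hx0, max_eq_left (mul_nonneg h0.le hlog0)]
    rw [hplog]
    have hEx : E ^ ϑ ≤ x ^ ϑ := Real.rpow_le_rpow hE0.le h.le h0.le
    set X := x ^ ϑ
    set L := Real.log x
    set Y := E ^ ϑ
    have step1 : X * L / ϑ - X/ϑ^2 + Y/ϑ^2 ≤ X * L / ϑ := by
      have := (div_le_div_iff_of_pos_right (c := ϑ^2) (by positivity)).2 hEx
      linarith
    have hid : X * L / ϑ = (1/ϑ^2) * (ϑ * L) * X := by
      field_simp
    have hC1 : 1/ϑ^2 ≤ 1/(ϑ*(1-ϑ)) + 1/ϑ^2 := le_add_of_nonneg_left (by positivity)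
    have step2 : X * L / ϑ ≤ (1/(ϑ*(1-ϑ)) + 1/ϑ^2) * ((1 + ϑ * L) * X) := by
      rw [hid]
      nlinarith [mul_le_mul_of_nonneg_right hC1
          (mul_nonneg (mul_nonneg h0.le hlog0) hxp),
        mul_nonneg (le_of_lt (by positivity : (0:ℝ) < 1/(ϑ*(1-ϑ)) + 1/ϑ^2)) hxp]
    linarith

end GAux2


end Helpers

/-- for `ϑ ∈ (0,1)`: `g_ϑ(x) ∼ (1/ϑ) x^ϑ log x` as `x → ∞`, `g_ϑ` is
subadditive on `[0,∞)`, and there is `C_ϑ > 0` with `g_ϑ(x) ≤ C_ϑ f_1(x^ϑ)` for all `x ≥ 0`. -/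
theorem gFun_properties (ϑ : ℝ) (h0 : 0 < ϑ) (h1 : ϑ < 1) :
    Tendsto (fun x => gFun ϑ x / ((1 / ϑ) * x ^ ϑ * Real.log x)) atTop (𝓝 1) ∧
    (∀ x y : ℝ, 0 ≤ x → 0 ≤ y → gFun ϑ (x + y) ≤ gFun ϑ x + gFun ϑ y) ∧
    ∃ C : ℝ, 0 < C ∧ ∀ x : ℝ, 0 ≤ x → gFun ϑ x ≤ C * fp 1 (x ^ ϑ) := by
  refine ⟨GAux2.gFun_tendsto h0 h1, fun x y hx hy => GAux2.gFun_subadd h0 h1 hx hy, ?_⟩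
  obtain ⟨C, hC, hbound⟩ := GAux2.gFun_bound h0 h1
  exact ⟨C, hC, fun x hx => by simpa [fp, plog, Real.rpow_one] using hbound x hx⟩
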